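/- (Proposition 1, local contraction form.) For every c with 2/π < c < 1 there exists ε > 0 such that for all Δ with 0 < |Δ| < ε, the progressively-balanced-sampling update satisfies |θ̂(Δ) − θ*| ≤ c·|Δ|. -/

import Mathlib

/-- The standard normal density `φ`. -/
noncomputable def stdGauss (t : ℝ) : ℝ :=
  (Real.sqrt (2 * Real.pi))⁻¹ * Real.exp (-t ^ 2 / 2)

/-- The standard normal CDF `Φ`. -/
noncomputable def stdCDF (t : ℝ) : ℝ := ∫ s in Set.Iic t, stdGauss s

/-- The (pseudo-)prior of the head class: `p1(Δ) = e^{2xΔ}/(1+e^{2xΔ})`, `x = (μ2−μ1)/2`. -/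
noncomputable def pHead (x Δ : ℝ) : ℝ := Real.exp (2 * x * Δ) / (1 + Real.exp (2 * x * Δ))

/-- The (pseudo-)prior of the tail class: `p2(Δ) = 1/(1+e^{2xΔ})`, `x = (μ2−μ1)/2`. -/
noncomputable def pTail (x Δ : ℝ) : ℝ := 1 / (1 + Real.exp (2 * x * Δ))

/-- The mixture density `f_Δ(t) = p1(Δ)·φ(t−μ1) + p2(Δ)·φ(t−μ2)`. -/
noncomputable def mixDensity (μ1 μ2 Δ t : ℝ) : ℝ :=
  pHead ((μ2 - μ1) / 2) Δ * stdGauss (t - μ1) + pTail ((μ2 - μ1) / 2) Δ * stdGauss (t - μ2)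

/-- The conditional mean `m1(Δ)` of `f_Δ` to the left of the boundary `θ* + Δ`. -/
noncomputable def mLeft (μ1 μ2 Δ : ℝ) : ℝ :=
  (∫ t in Set.Iic ((μ1 + μ2) / 2 + Δ), t * mixDensity μ1 μ2 Δ t) /
    ∫ t in Set.Iic ((μ1 + μ2) / 2 + Δ), mixDensity μ1 μ2 Δ t

/-- The conditional mean `m2(Δ)` of `f_Δ` to the right of the boundary `θ* + Δ`. -/
noncomputable def mRight (μ1 μ2 Δ : ℝ) : ℝ :=
  (∫ t in Set.Ioi ((μ1 + μ2) / 2 + Δ), t * mixDensity μ1 μ2 Δ t) /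
    ∫ t in Set.Ioi ((μ1 + μ2) / 2 + Δ), mixDensity μ1 μ2 Δ t

/-- The progressively-balanced-sampling update `θ̂(Δ) = (m1(Δ) + m2(Δ))/2`. -/
noncomputable def pbsUpdate (μ1 μ2 Δ : ℝ) : ℝ := (mLeft μ1 μ2 Δ + mRight μ1 μ2 Δ) / 2

open MeasureTheory Real Set Filter Topology ProbabilityTheory

/-!
Put `x = (μ2 - μ1)/2`. The conditional means are explicit in `Φ` and `φ`, and `θ̂(Δ) - θ*` is
`(N/A + (D - N)/(1 - A))/2`, where `A`, `N` are the mass and first moment about `θ*` of `f_Δ` left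
of `θ* + Δ` and `D` is the mean of `f_Δ` minus `θ*`. At `Δ = 0` the split is balanced
(`A = 1/2`, `N = -A'`), so `θ*` is a fixed point, the derivative of `N` drops out, and
`θ̂'(0) = 4u² - x²` with `u = A'(0) = φ(x) + x(Φ(x) - 1/2)`. This rate is even in `x`, nonnegative
by the Mills-ratio bound `x(1 - Φ) ≤ φ`, equal to `2/π` at `x = 0`, and nonincreasing for `x ≥ 0`
by the sharper bound `φ² ≤ (1 - Φ)² + xφ(1 - Φ)`. As `θ̂'(0) ≤ 2/π < c`, the first-order
expansion of `θ̂` at `0` gives the contraction.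
-/

lemma integral_Ioi_of_hasDerivAt_of_integrable {f f' : ℝ → ℝ} (a : ℝ)
    (hderiv : ∀ x, HasDerivAt f (f' x) x) (hf : Integrable f) (hf' : Integrable f') :
    ∫ x in Ioi a, f' x = -f a := by
  have hlim := tendsto_zero_of_hasDerivAt_of_integrableOn_Ioi (a := a) (fun x _ ↦ hderiv x)
    hf'.integrableOn hf.integrableOn
  simpa using integral_Ioi_of_hasDerivAt_of_tendsto' (fun x _ ↦ hderiv x) hf'.integrableOn hlim

lemma integral_Iic_of_hasDerivAt_of_integrable {f f' : ℝ → ℝ} (a : ℝ)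
    (hderiv : ∀ x, HasDerivAt f (f' x) x) (hf : Integrable f) (hf' : Integrable f') :
    ∫ x in Iic a, f' x = f a := by
  have hlim := tendsto_zero_of_hasDerivAt_of_integrableOn_Iic (a := a) (fun x _ ↦ hderiv x)
    hf'.integrableOn hf.integrableOn
  simpa using integral_Iic_of_hasDerivAt_of_tendsto' (fun x _ ↦ hderiv x) hf'.integrableOn hlim

lemma integral_Iic_comp_sub_right (g : ℝ → ℝ) (a μ : ℝ) :
    ∫ t in Iic a, g (t - μ) = ∫ t in Iic (a - μ), g t := by
  have := (measurePreserving_sub_right volume μ).setIntegral_preimage_emb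
    (measurableEmbedding_subRight μ) g (Iic (a - μ))
  rwa [preimage_sub_const_Iic, sub_add_cancel] at this

lemma integral_Ioi_comp_sub_right (g : ℝ → ℝ) (a μ : ℝ) :
    ∫ t in Ioi a, g (t - μ) = ∫ t in Ioi (a - μ), g t := by
  have := (measurePreserving_sub_right volume μ).setIntegral_preimage_emb
    (measurableEmbedding_subRight μ) g (Ioi (a - μ))
  rwa [preimage_sub_const_Ioi, sub_add_cancel] at this

lemma HasDerivAt.eventually_abs_sub_le {f : ℝ → ℝ} {f' c x : ℝ} (hf : HasDerivAt f f' x)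
    (hc : |f'| < c) : ∀ᶠ y in 𝓝 x, |f y - f x| ≤ c * |y - x| := by
  filter_upwards [(hasDerivAt_iff_isLittleO.1 hf).def (sub_pos.2 hc)] with y hy
  rw [smul_eq_mul, Real.norm_eq_abs, Real.norm_eq_abs] at hy
  calc |f y - f x| = |(f y - f x - (y - x) * f') + (y - x) * f'| := by ring_nf
    _ ≤ |f y - f x - (y - x) * f'| + |y - x| * |f'| := (abs_add_le _ _).trans_eq (by rw [abs_mul])
    _ ≤ (c - |f'|) * |y - x| + |y - x| * |f'| := by gcongr
    _ = c * |y - x| := by ring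

section StdGauss

lemma stdGauss_eq_gaussianPDFReal : stdGauss = gaussianPDFReal 0 1 := by
  ext t
  simp [stdGauss, gaussianPDFReal]

lemma stdGauss_pos (t : ℝ) : 0 < stdGauss t := by
  unfold stdGauss; positivity

lemma stdGauss_neg (t : ℝ) : stdGauss (-t) = stdGauss t := by
  simp [stdGauss]

lemma stdGauss_le_half (t : ℝ) : stdGauss t ≤ 1 / 2 := by
  have hsqrt : 2 ≤ √(2 * π) := Real.le_sqrt_of_sq_le (by nlinarith [pi_gt_three])
  calc stdGauss t ≤ (√(2 * π))⁻¹ * 1 := by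
        unfold stdGauss; gcongr; exact exp_le_one_iff.2 (by nlinarith [sq_nonneg t])
    _ ≤ 1 / 2 := by rw [mul_one, one_div]; gcongr

lemma stdGauss_zero_sq : stdGauss 0 ^ 2 = (2 * π)⁻¹ := by
  have h : rexp (-0 ^ 2 / 2) = 1 := by norm_num
  rw [stdGauss, h, mul_one, inv_pow, sq_sqrt (by positivity)]

lemma hasDerivAt_stdGauss (t : ℝ) : HasDerivAt stdGauss (-t * stdGauss t) t := by
  have h : HasDerivAt (fun s : ℝ ↦ -s ^ 2 / 2) (-t) t :=
    ((hasDerivAt_pow 2 t).fun_neg.div_const 2).congr_deriv (by norm_num; ring)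
  exact (h.exp.const_mul (√(2 * π))⁻¹).congr_deriv (by unfold stdGauss; ring)

@[fun_prop]
lemma differentiable_stdGauss : Differentiable ℝ stdGauss :=
  fun t ↦ (hasDerivAt_stdGauss t).differentiableAt

lemma integrable_stdGauss : Integrable stdGauss := by
  rw [stdGauss_eq_gaussianPDFReal]; exact integrable_gaussianPDFReal 0 1

lemma integral_stdGauss : ∫ t, stdGauss t = 1 := by
  rw [stdGauss_eq_gaussianPDFReal]; exact integral_gaussianPDFReal_eq_one 0 one_ne_zero

lemma integrable_pow_mul_stdGauss (n : ℕ) : Integrable fun t ↦ t ^ n * stdGauss t := by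
  have := (integrable_rpow_mul_exp_neg_mul_sq (b := 1 / 2) (by norm_num)
    (s := n) (by linarith [n.cast_nonneg (α := ℝ)])).const_mul (√(2 * π))⁻¹
  refine this.congr (ae_of_all _ fun t ↦ ?_)
  dsimp only
  rw [rpow_natCast, stdGauss, show -(1 / 2) * t ^ 2 = -t ^ 2 / 2 by ring]
  ring

lemma integrable_mul_stdGauss : Integrable fun t ↦ t * stdGauss t := by
  simpa using integrable_pow_mul_stdGauss 1

lemma integral_Iic_mul_stdGauss (a : ℝ) : ∫ t in Iic a, t * stdGauss t = -stdGauss a :=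
  integral_Iic_of_hasDerivAt_of_integrable (f := fun t ↦ -stdGauss t) a
    (fun t ↦ by simpa using (hasDerivAt_stdGauss t).fun_neg) integrable_stdGauss.neg
    integrable_mul_stdGauss

lemma integral_Ioi_mul_stdGauss (a : ℝ) : ∫ t in Ioi a, t * stdGauss t = stdGauss a := by
  simpa using integral_Ioi_of_hasDerivAt_of_integrable (f := fun t ↦ -stdGauss t) a
    (fun t ↦ by simpa using (hasDerivAt_stdGauss t).fun_neg) integrable_stdGauss.neg
    integrable_mul_stdGauss

end StdGauss

section StdCDF

lemma integral_Ioi_stdGauss (a : ℝ) : ∫ t in Ioi a, stdGauss t = 1 - stdCDF a := by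
  rw [← integral_stdGauss, ← intervalIntegral.integral_Iic_add_Ioi
    integrable_stdGauss.integrableOn integrable_stdGauss.integrableOn, stdCDF, add_sub_cancel_left]

lemma setIntegral_stdGauss_pos {s : Set ℝ} (hs : 0 < volume s) : 0 < ∫ t in s, stdGauss t := by
  have hsupp : Function.support stdGauss = univ :=
    eq_univ_of_forall fun t ↦ (stdGauss_pos t).ne'
  rwa [setIntegral_pos_iff_support_of_nonneg_ae (ae_of_all _ fun t ↦ (stdGauss_pos t).le)
    integrable_stdGauss.integrableOn, hsupp, univ_inter]

lemma stdCDF_pos (a : ℝ) : 0 < stdCDF a :=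
  setIntegral_stdGauss_pos (by simp)

lemma stdCDF_lt_one (a : ℝ) : stdCDF a < 1 := by
  have := setIntegral_stdGauss_pos (s := Ioi a) (by simp)
  linarith [integral_Ioi_stdGauss a]

lemma stdCDF_neg (a : ℝ) : stdCDF (-a) = 1 - stdCDF a := by
  rw [stdCDF, ← integral_comp_neg_Ioi]
  simp_rw [stdGauss_neg]
  exact integral_Ioi_stdGauss a

lemma stdCDF_zero : stdCDF 0 = 1 / 2 := by
  linarith [neg_zero (G := ℝ) ▸ stdCDF_neg 0]

lemma stdCDF_sub_stdCDF (a b : ℝ) : stdCDF b - stdCDF a = ∫ t in a..b, stdGauss t :=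
  intervalIntegral.integral_Iic_sub_Iic integrable_stdGauss.integrableOn
    integrable_stdGauss.integrableOn

lemma hasDerivAt_stdCDF (a : ℝ) : HasDerivAt stdCDF (stdGauss a) a := by
  have hΦ : stdCDF = fun b ↦ stdCDF 0 + ∫ t in (0 : ℝ)..b, stdGauss t :=
    funext fun b ↦ by linarith [stdCDF_sub_stdCDF 0 b]
  rw [hΦ]
  exact (differentiable_stdGauss.continuous.integral_hasStrictDerivAt 0 a).hasDerivAt.const_add _

@[fun_prop]
lemma differentiable_stdCDF : Differentiable ℝ stdCDF :=
  fun a ↦ (hasDerivAt_stdCDF a).differentiableAt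

lemma one_half_le_stdCDF {x : ℝ} (hx : 0 ≤ x) : 1 / 2 ≤ stdCDF x := by
  have := intervalIntegral.integral_nonneg (μ := volume) hx fun t _ ↦ (stdGauss_pos t).le
  linarith [stdCDF_sub_stdCDF 0 x, stdCDF_zero]

lemma two_mul_stdCDF_sub_one_le {x : ℝ} (hx : 0 ≤ x) : 2 * stdCDF x - 1 ≤ x := by
  have := intervalIntegral.integral_mono_on hx integrable_stdGauss.intervalIntegrable
    intervalIntegrable_const fun t _ ↦ stdGauss_le_half t
  rw [intervalIntegral.integral_const, smul_eq_mul, ← stdCDF_sub_stdCDF, stdCDF_zero] at this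
  linarith

lemma integral_Ioi_sq_mul_stdGauss (a : ℝ) :
    ∫ t in Ioi a, t ^ 2 * stdGauss t = a * stdGauss a + (1 - stdCDF a) := by
  have hderiv (t : ℝ) : HasDerivAt (fun s ↦ -(s * stdGauss s)) ((t ^ 2 - 1) * stdGauss t) t :=
    ((hasDerivAt_id' t).fun_mul (hasDerivAt_stdGauss t)).fun_neg.congr_deriv (by ring)
  have hint : Integrable fun t ↦ (t ^ 2 - 1) * stdGauss t := by
    refine ((integrable_pow_mul_stdGauss 2).sub integrable_stdGauss).congr (ae_of_all _ fun t ↦ ?_)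
    simp only [Pi.sub_apply]; ring
  have hsplit : ∫ t in Ioi a, t ^ 2 * stdGauss t
      = (∫ t in Ioi a, (t ^ 2 - 1) * stdGauss t) + ∫ t in Ioi a, stdGauss t := by
    rw [← integral_add hint.integrableOn integrable_stdGauss.integrableOn]
    congr 1; ext t; ring
  rw [hsplit, integral_Ioi_of_hasDerivAt_of_integrable a hderiv integrable_mul_stdGauss.neg hint,
    integral_Ioi_stdGauss, neg_neg]

end StdCDF

section MillsRatio

lemma mul_one_sub_stdCDF_le_stdGauss (x : ℝ) : x * (1 - stdCDF x) ≤ stdGauss x := by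
  have hintegral : ∫ t in Ioi x, (t - x) * stdGauss t = stdGauss x - x * (1 - stdCDF x) := by
    simp_rw [sub_mul]
    rw [integral_sub integrable_mul_stdGauss.integrableOn
      (integrable_stdGauss.const_mul x).integrableOn, integral_const_mul,
      integral_Ioi_mul_stdGauss, integral_Ioi_stdGauss]
  have hnonneg : 0 ≤ ∫ t in Ioi x, (t - x) * stdGauss t :=
    setIntegral_nonneg measurableSet_Ioi fun t ht ↦
      mul_nonneg (sub_nonneg.2 (le_of_lt ht)) (stdGauss_pos t).le
  linarith

-- Expand `∫_{t > x} (R t - φ(x))² φ(t) dt ≥ 0`, where `R = 1 - Φ(x)`.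
lemma stdGauss_sq_le (x : ℝ) :
    stdGauss x ^ 2 ≤ (1 - stdCDF x) ^ 2 + x * stdGauss x * (1 - stdCDF x) := by
  set R := 1 - stdCDF x with hR
  set F := stdGauss x
  have hRpos : 0 < R := sub_pos.2 (stdCDF_lt_one x)
  have hintegral : ∫ t in Ioi x, (R * t - F) ^ 2 * stdGauss t
      = R * (R ^ 2 + x * F * R - F ^ 2) := by
    have hexpand (t : ℝ) : (R * t - F) ^ 2 * stdGauss t
        = R ^ 2 * (t ^ 2 * stdGauss t) - 2 * R * F * (t * stdGauss t) + F ^ 2 * stdGauss t := by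
      ring
    have h2 := (integrable_pow_mul_stdGauss 2).const_mul (R ^ 2)
    have h1 := integrable_mul_stdGauss.const_mul (2 * R * F)
    have h0 := integrable_stdGauss.const_mul (F ^ 2)
    simp_rw [hexpand]
    rw [integral_add (by exact (h2.sub h1).integrableOn) h0.integrableOn,
      integral_sub h2.integrableOn h1.integrableOn,
      integral_const_mul, integral_const_mul, integral_const_mul, integral_Ioi_sq_mul_stdGauss,
      integral_Ioi_mul_stdGauss, integral_Ioi_stdGauss, ← hR]
    ring
  have hnonneg : 0 ≤ ∫ t in Ioi x, (R * t - F) ^ 2 * stdGauss t :=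
    setIntegral_nonneg measurableSet_Ioi fun t _ ↦ mul_nonneg (sq_nonneg _) (stdGauss_pos t).le
  rw [hintegral] at hnonneg
  linarith [(mul_nonneg_iff_of_pos_left hRpos).1 hnonneg]

-- With `a = 2Φ(x) - 1 ≤ x`: if `aφ(x) > w = xR(1 + a)`, then
-- `a²(φ(x)² - xφ(x)R) > w(w - axR) = x²R²(1 + a) ≥ a²R²`, contradicting `stdGauss_sq_le`.
lemma two_mul_stdCDF_sub_one_mul_stdGauss_le {x : ℝ} (hx : 0 ≤ x) :
    (2 * stdCDF x - 1) * stdGauss x ≤ x * (1 - stdCDF x) * (2 * stdCDF x) := by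
  set R := 1 - stdCDF x
  set F := stdGauss x
  set a := 2 * stdCDF x - 1
  have hR : 0 < R := sub_pos.2 (stdCDF_lt_one x)
  have ha0 : 0 ≤ a := by linarith [one_half_le_stdCDF hx]
  have hax : a ≤ x := two_mul_stdCDF_sub_one_le hx
  have hF : F ^ 2 ≤ R ^ 2 + x * F * R := stdGauss_sq_le x
  rw [show 2 * stdCDF x = 1 + a by ring]
  by_contra! h
  set w := x * R * (1 + a)
  have hgap : 0 < (a * F - w) * (a * F + w - a * x * R) :=
    mul_pos (by linarith) (by nlinarith [mul_nonneg hx hR.le])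
  have hxa : a ^ 2 * R ^ 2 ≤ x ^ 2 * R ^ 2 * (1 + a) := by
    nlinarith [mul_le_mul hax hax ha0 hx, mul_nonneg (mul_nonneg (sq_nonneg x) (sq_nonneg R)) ha0]
  nlinarith [mul_le_mul_of_nonneg_left hF (sq_nonneg a)]

end MillsRatio

section ContractionRate

-- `E|Z - x| / 2` for a standard normal `Z`.
noncomputable def halfAbsDev (x : ℝ) : ℝ := stdGauss x + x * (stdCDF x - 1 / 2)

lemma halfAbsDev_neg (x : ℝ) : halfAbsDev (-x) = halfAbsDev x := by
  rw [halfAbsDev, halfAbsDev, stdGauss_neg, stdCDF_neg]; ring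

lemma hasDerivAt_halfAbsDev (x : ℝ) : HasDerivAt halfAbsDev (stdCDF x - 1 / 2) x :=
  ((hasDerivAt_stdGauss x).add ((hasDerivAt_id' x).fun_mul
    ((hasDerivAt_stdCDF x).sub_const (1 / 2)))).congr_deriv (by ring)

lemma abs_le_two_mul_halfAbsDev (x : ℝ) : |x| ≤ 2 * halfAbsDev x := by
  have h (y : ℝ) : y ≤ 2 * halfAbsDev y := by
    rw [halfAbsDev]; linarith [mul_one_sub_stdCDF_le_stdGauss y]
  exact abs_le'.2 ⟨h x, by simpa [halfAbsDev_neg] using h (-x)⟩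

noncomputable def contractionRate (x : ℝ) : ℝ := 4 * halfAbsDev x ^ 2 - x ^ 2

lemma contractionRate_neg (x : ℝ) : contractionRate (-x) = contractionRate x := by
  rw [contractionRate, contractionRate, halfAbsDev_neg, neg_sq]

lemma contractionRate_zero : contractionRate 0 = 2 / π := by
  have h : halfAbsDev 0 = stdGauss 0 := by simp [halfAbsDev]
  rw [contractionRate, h, stdGauss_zero_sq]
  field_simp
  ring

lemma contractionRate_nonneg (x : ℝ) : 0 ≤ contractionRate x := by
  have := abs_le_two_mul_halfAbsDev x
  rw [contractionRate, ← sq_abs x]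
  nlinarith [abs_nonneg x]

lemma antitoneOn_contractionRate : AntitoneOn contractionRate (Ici 0) := by
  have hderiv (x : ℝ) : HasDerivAt contractionRate
      (4 * (2 * halfAbsDev x * (stdCDF x - 1 / 2)) - 2 * x) x :=
    ((((hasDerivAt_halfAbsDev x).pow 2).const_mul 4).fun_sub (hasDerivAt_pow 2 x)).congr_deriv
      (by ring)
  refine antitoneOn_of_hasDerivWithinAt_nonpos (convex_Ici 0)
    (fun x _ ↦ (hderiv x).continuousAt.continuousWithinAt)
    (fun x _ ↦ (hderiv x).hasDerivWithinAt) fun x hx ↦ ?_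
  rw [interior_Ici] at hx
  have := two_mul_stdCDF_sub_one_mul_stdGauss_le (le_of_lt hx)
  rw [halfAbsDev]
  nlinarith

lemma contractionRate_le (x : ℝ) : contractionRate x ≤ 2 / π := by
  wlog hx : 0 ≤ x
  · simpa [contractionRate_neg] using this (-x) (by linarith)
  simpa [contractionRate_zero] using antitoneOn_contractionRate self_mem_Ici hx hx

end ContractionRate

section Mixture

lemma pTail_eq_one_sub (x Δ : ℝ) : pTail x Δ = 1 - pHead x Δ := by
  rw [pTail, pHead, eq_sub_iff_add_eq, ← add_div, add_comm, div_self (by positivity)]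

lemma pHead_zero (x : ℝ) : pHead x 0 = 1 / 2 := by
  norm_num [pHead]

lemma pHead_pos (x Δ : ℝ) : 0 < pHead x Δ := by
  unfold pHead; positivity

lemma pTail_pos (x Δ : ℝ) : 0 < pTail x Δ := by
  unfold pTail; positivity

lemma hasDerivAt_pHead (x Δ : ℝ) :
    HasDerivAt (pHead x) (2 * x * pHead x Δ * pTail x Δ) Δ := by
  have he := ((hasDerivAt_id' Δ).const_mul (2 * x)).exp
  exact (he.div (he.const_add 1) (by positivity)).congr_deriv
    (by rw [pHead, pTail]; field_simp; ring)

lemma hasDerivAt_pTail (x Δ : ℝ) :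
    HasDerivAt (pTail x) (-(2 * x * pHead x Δ * pTail x Δ)) Δ := by
  exact ((hasDerivAt_pHead x Δ).const_sub 1).congr_of_eventuallyEq
    (Eventually.of_forall (pTail_eq_one_sub x))

@[fun_prop]
lemma differentiable_pHead (x : ℝ) : Differentiable ℝ (pHead x) :=
  fun Δ ↦ (hasDerivAt_pHead x Δ).differentiableAt

@[fun_prop]
lemma differentiable_pTail (x : ℝ) : Differentiable ℝ (pTail x) :=
  fun Δ ↦ (hasDerivAt_pTail x Δ).differentiableAt

lemma integrable_stdGauss_sub (μ : ℝ) : Integrable fun t ↦ stdGauss (t - μ) :=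
  integrable_stdGauss.comp_sub_right μ

lemma integrable_mul_stdGauss_sub (μ : ℝ) : Integrable fun t ↦ t * stdGauss (t - μ) := by
  refine ((integrable_mul_stdGauss.comp_sub_right μ).add
    ((integrable_stdGauss_sub μ).const_mul μ)).congr (ae_of_all _ fun t ↦ ?_)
  simp only [Pi.add_apply]; ring

lemma integral_Iic_stdGauss_sub (a μ : ℝ) :
    ∫ t in Iic a, stdGauss (t - μ) = stdCDF (a - μ) :=
  integral_Iic_comp_sub_right stdGauss a μ

lemma integral_Ioi_stdGauss_sub (a μ : ℝ) :
    ∫ t in Ioi a, stdGauss (t - μ) = 1 - stdCDF (a - μ) := by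
  rw [integral_Ioi_comp_sub_right, integral_Ioi_stdGauss]

lemma integral_Iic_mul_stdGauss_sub (a μ : ℝ) :
    ∫ t in Iic a, t * stdGauss (t - μ) = μ * stdCDF (a - μ) - stdGauss (a - μ) := by
  have h := integral_Iic_comp_sub_right (fun s ↦ (s + μ) * stdGauss s) a μ
  simp only [sub_add_cancel, add_mul] at h
  rw [h, integral_add integrable_mul_stdGauss.integrableOn
    (integrable_stdGauss.const_mul μ).integrableOn, integral_const_mul,
    integral_Iic_mul_stdGauss, ← stdCDF]
  ring

lemma integral_Ioi_mul_stdGauss_sub (a μ : ℝ) :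
    ∫ t in Ioi a, t * stdGauss (t - μ) = μ * (1 - stdCDF (a - μ)) + stdGauss (a - μ) := by
  have h := integral_Ioi_comp_sub_right (fun s ↦ (s + μ) * stdGauss s) a μ
  simp only [sub_add_cancel, add_mul] at h
  rw [h, integral_add integrable_mul_stdGauss.integrableOn
    (integrable_stdGauss.const_mul μ).integrableOn, integral_const_mul,
    integral_Ioi_mul_stdGauss, integral_Ioi_stdGauss]
  ring

lemma setIntegral_mixDensity (μ1 μ2 Δ : ℝ) (s : Set ℝ) :
    ∫ t in s, mixDensity μ1 μ2 Δ t
      = pHead ((μ2 - μ1) / 2) Δ * (∫ t in s, stdGauss (t - μ1))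
        + pTail ((μ2 - μ1) / 2) Δ * ∫ t in s, stdGauss (t - μ2) := by
  simp only [mixDensity]
  rw [integral_add ((integrable_stdGauss_sub μ1).const_mul _).integrableOn
    ((integrable_stdGauss_sub μ2).const_mul _).integrableOn, integral_const_mul,
    integral_const_mul]

lemma setIntegral_mul_mixDensity (μ1 μ2 Δ : ℝ) (s : Set ℝ) :
    ∫ t in s, t * mixDensity μ1 μ2 Δ t
      = pHead ((μ2 - μ1) / 2) Δ * (∫ t in s, t * stdGauss (t - μ1))
        + pTail ((μ2 - μ1) / 2) Δ * ∫ t in s, t * stdGauss (t - μ2) := by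
  have hsplit (t : ℝ) : t * mixDensity μ1 μ2 Δ t
      = pHead ((μ2 - μ1) / 2) Δ * (t * stdGauss (t - μ1))
        + pTail ((μ2 - μ1) / 2) Δ * (t * stdGauss (t - μ2)) := by
    rw [mixDensity]; ring
  simp only [hsplit]
  rw [integral_add ((integrable_mul_stdGauss_sub μ1).const_mul _).integrableOn
    ((integrable_mul_stdGauss_sub μ2).const_mul _).integrableOn, integral_const_mul,
    integral_const_mul]

-- Mass and first moment about `θ*` of `f_Δ` on `(-∞, θ* + Δ]`, where `x = (μ2 - μ1)/2`.
noncomputable def leftMass (x Δ : ℝ) : ℝ :=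
  pHead x Δ * stdCDF (Δ + x) + pTail x Δ * stdCDF (Δ - x)

noncomputable def leftMoment (x Δ : ℝ) : ℝ :=
  pTail x Δ * (x * stdCDF (Δ - x) - stdGauss (Δ - x))
    - pHead x Δ * (x * stdCDF (Δ + x) + stdGauss (Δ + x))

lemma leftMass_pos (x Δ : ℝ) : 0 < leftMass x Δ := by
  have := stdCDF_pos (Δ + x); have := stdCDF_pos (Δ - x)
  have := pHead_pos x Δ; have := pTail_pos x Δ
  unfold leftMass; positivity

lemma leftMass_lt_one (x Δ : ℝ) : leftMass x Δ < 1 := by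
  have h1 := mul_lt_mul_of_pos_left (stdCDF_lt_one (Δ + x)) (pHead_pos x Δ)
  have h2 := mul_lt_mul_of_pos_left (stdCDF_lt_one (Δ - x)) (pTail_pos x Δ)
  rw [leftMass]
  linarith [pTail_eq_one_sub x Δ]

lemma mLeft_eq (μ1 μ2 Δ : ℝ) :
    mLeft μ1 μ2 Δ = (μ1 + μ2) / 2
      + leftMoment ((μ2 - μ1) / 2) Δ / leftMass ((μ2 - μ1) / 2) Δ := by
  have hA := (leftMass_pos ((μ2 - μ1) / 2) Δ).ne'
  have e1 : (μ1 + μ2) / 2 + Δ - μ1 = Δ + (μ2 - μ1) / 2 := by ring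
  have e2 : (μ1 + μ2) / 2 + Δ - μ2 = Δ - (μ2 - μ1) / 2 := by ring
  rw [mLeft, setIntegral_mixDensity, setIntegral_mul_mixDensity, integral_Iic_stdGauss_sub,
    integral_Iic_stdGauss_sub, integral_Iic_mul_stdGauss_sub, integral_Iic_mul_stdGauss_sub,
    e1, e2, ← leftMass, div_eq_iff hA, add_mul, div_mul_cancel₀ _ hA, leftMass, leftMoment]
  ring

lemma mRight_eq (μ1 μ2 Δ : ℝ) :
    mRight μ1 μ2 Δ = (μ1 + μ2) / 2
      + ((μ2 - μ1) / 2 * (pTail ((μ2 - μ1) / 2) Δ - pHead ((μ2 - μ1) / 2) Δ)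
          - leftMoment ((μ2 - μ1) / 2) Δ) / (1 - leftMass ((μ2 - μ1) / 2) Δ) := by
  have hA := (sub_pos.2 (leftMass_lt_one ((μ2 - μ1) / 2) Δ)).ne'
  have e1 : (μ1 + μ2) / 2 + Δ - μ1 = Δ + (μ2 - μ1) / 2 := by ring
  have e2 : (μ1 + μ2) / 2 + Δ - μ2 = Δ - (μ2 - μ1) / 2 := by ring
  have hmass : pHead ((μ2 - μ1) / 2) Δ * (1 - stdCDF (Δ + (μ2 - μ1) / 2))
      + pTail ((μ2 - μ1) / 2) Δ * (1 - stdCDF (Δ - (μ2 - μ1) / 2))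
      = 1 - leftMass ((μ2 - μ1) / 2) Δ := by
    rw [leftMass, pTail_eq_one_sub]; ring
  rw [mRight, setIntegral_mixDensity, setIntegral_mul_mixDensity, integral_Ioi_stdGauss_sub,
    integral_Ioi_stdGauss_sub, integral_Ioi_mul_stdGauss_sub, integral_Ioi_mul_stdGauss_sub,
    e1, e2, hmass, div_eq_iff hA, add_mul, div_mul_cancel₀ _ hA, leftMass, leftMoment,
    pTail_eq_one_sub]
  ring

end Mixture

section Update

-- Average of the two conditional means, measured from a reference point, of a probability
-- density with mass `A` and first moment `N` to the left of the split and total first moment `D`.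
noncomputable def balancedUpdate (A N D : ℝ) : ℝ := (N / A + (D - N) / (1 - A)) / 2

lemma pbsUpdate_sub_eq (μ1 μ2 Δ : ℝ) :
    pbsUpdate μ1 μ2 Δ - (μ1 + μ2) / 2
      = balancedUpdate (leftMass ((μ2 - μ1) / 2) Δ) (leftMoment ((μ2 - μ1) / 2) Δ)
          ((μ2 - μ1) / 2 * (pTail ((μ2 - μ1) / 2) Δ - pHead ((μ2 - μ1) / 2) Δ)) := by
  rw [pbsUpdate, mLeft_eq, mRight_eq, balancedUpdate]
  ring

lemma balancedUpdate_half (a D : ℝ) : balancedUpdate (1 / 2) (-a) D = D := by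
  rw [balancedUpdate]; ring

-- At a balanced split (`A = 1/2`, `N = -A'`) the derivative of `N` cancels out.
lemma hasDerivAt_balancedUpdate {A N D : ℝ → ℝ} {a d z : ℝ} (hA : HasDerivAt A a z)
    (hN : DifferentiableAt ℝ N z) (hD : HasDerivAt D d z) (hAz : A z = 1 / 2)
    (hNz : N z = -a) :
    HasDerivAt (fun y ↦ balancedUpdate (A y) (N y) (D y)) (4 * a ^ 2 + 2 * a * D z + d) z := by
  have hA0 : A z ≠ 0 := by rw [hAz]; norm_num
  have hA1 : 1 - A z ≠ 0 := by rw [hAz]; norm_num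
  have hN' := hN.hasDerivAt
  have h := ((hN'.div hA hA0).add ((hD.fun_sub hN').div (hA.const_sub 1) hA1)).div_const 2
  refine h.congr_deriv ?_
  rw [hAz, hNz]
  ring

lemma leftMass_zero (x : ℝ) : leftMass x 0 = 1 / 2 := by
  rw [leftMass, pTail_eq_one_sub, pHead_zero, zero_add, zero_sub, stdCDF_neg]; ring

lemma leftMoment_zero (x : ℝ) : leftMoment x 0 = -halfAbsDev x := by
  rw [leftMoment, halfAbsDev, pTail_eq_one_sub, pHead_zero, zero_add, zero_sub, stdCDF_neg,
    stdGauss_neg]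
  ring

lemma hasDerivAt_leftMass (x : ℝ) : HasDerivAt (leftMass x) (halfAbsDev x) 0 := by
  have hΦplus := (hasDerivAt_stdCDF (0 + x)).comp_add_const 0 x
  have hΦminus := (hasDerivAt_stdCDF (0 - x)).comp_sub_const 0 x
  refine (((hasDerivAt_pHead x 0).fun_mul hΦplus).fun_add
    ((hasDerivAt_pTail x 0).fun_mul hΦminus)).congr_deriv ?_
  rw [halfAbsDev, pTail_eq_one_sub, pHead_zero, zero_add, zero_sub, stdCDF_neg, stdGauss_neg]
  ring

@[fun_prop]
lemma differentiable_leftMoment (x : ℝ) : Differentiable ℝ (leftMoment x) := by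
  unfold leftMoment; fun_prop

lemma hasDerivAt_mul_pTail_sub_pHead (x : ℝ) :
    HasDerivAt (fun Δ ↦ x * (pTail x Δ - pHead x Δ)) (-x ^ 2) 0 :=
  (((hasDerivAt_pTail x 0).sub (hasDerivAt_pHead x 0)).const_mul x).congr_deriv
    (by rw [pTail_eq_one_sub, pHead_zero]; ring)

lemma pbsUpdate_zero (μ1 μ2 : ℝ) : pbsUpdate μ1 μ2 0 = (μ1 + μ2) / 2 := by
  have h := pbsUpdate_sub_eq μ1 μ2 0
  rw [leftMass_zero, leftMoment_zero, balancedUpdate_half, pTail_eq_one_sub, pHead_zero] at h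
  linarith

lemma hasDerivAt_pbsUpdate (μ1 μ2 : ℝ) :
    HasDerivAt (pbsUpdate μ1 μ2) (contractionRate ((μ2 - μ1) / 2)) 0 := by
  set x := (μ2 - μ1) / 2
  have h := hasDerivAt_balancedUpdate (hasDerivAt_leftMass x) (differentiable_leftMoment x 0)
    (hasDerivAt_mul_pTail_sub_pHead x) (leftMass_zero x) (leftMoment_zero x)
  have hfun : pbsUpdate μ1 μ2 = fun Δ ↦ (μ1 + μ2) / 2 + balancedUpdate (leftMass x Δ)
      (leftMoment x Δ) (x * (pTail x Δ - pHead x Δ)) :=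
    funext fun Δ ↦ by rw [← pbsUpdate_sub_eq]; ring
  rw [hfun]
  exact (h.const_add _).congr_deriv (by rw [contractionRate, pTail_eq_one_sub, pHead_zero]; ring)

end Update

theorem pbsUpdate_local_contraction_general (μ1 μ2 : ℝ) :
    ∀ c : ℝ, 2 / Real.pi < c → c < 1 →
      ∃ ε > (0 : ℝ), ∀ Δ : ℝ, 0 < |Δ| → |Δ| < ε →
        |pbsUpdate μ1 μ2 Δ - (μ1 + μ2) / 2| ≤ c * |Δ| := by
  intro c hc _
  have hrate : |contractionRate ((μ2 - μ1) / 2)| < c := by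
    rw [abs_of_nonneg (contractionRate_nonneg _)]
    exact (contractionRate_le _).trans_lt hc
  obtain ⟨ε, hε, hball⟩ :=
    Metric.eventually_nhds_iff.1 ((hasDerivAt_pbsUpdate μ1 μ2).eventually_abs_sub_le hrate)
  refine ⟨ε, hε, fun Δ _ hΔ ↦ ?_⟩
  simpa [pbsUpdate_zero] using hball (show dist Δ 0 < ε by simpa using hΔ)

/-- **Proposition 1 (local contraction form).** For every `c` with `2/π < c < 1`
there is `ε > 0` such that for all `Δ` with `0 < |Δ| < ε`, the
progressively-balanced-sampling update satisfies `|θ̂(Δ) − θ*| ≤ c·|Δ|`. -/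
theorem pbsUpdate_local_contraction (μ1 μ2 : ℝ) (hμ : μ1 < μ2) :
    ∀ c : ℝ, 2 / Real.pi < c → c < 1 →
      ∃ ε > (0 : ℝ), ∀ Δ : ℝ, 0 < |Δ| → |Δ| < ε →
        |pbsUpdate μ1 μ2 Δ - (μ1 + μ2) / 2| ≤ c * |Δ| :=
  pbsUpdate_local_contraction_general μ1 μ2
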